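/- arXiv:1409.7909 — 7 statements merged into one kernel-verified Lean document; each statement's English description precedes it below -/
import Mathlib

section
/- Let N ≥ 3 and let x_1, …, x_N be real numbers such that sin(x_i − x_j) ≠ 0 for all i ≠ j. Then the sum over all ordered triples (i, j, k) of pairwise distinct indices in {1, …, N} of cot(x_i − x_j)·cot(x_i − x_k) equals −N(N−1)(N−2)/3. -/
open Finset

lemma my_cot_neg (t : ℝ) : Real.cot (-t) = -Real.cot t := by
  simp [Real.cot_eq_cos_div_sin, neg_div, div_neg]

lemma key_cot (a b c : ℝ) (h1 : Real.sin (a-b) ≠ 0) (h2 : Real.sin (b-c) ≠ 0)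
    (h3 : Real.sin (a-c) ≠ 0) :
    Real.cot (a-b) * Real.cot (a-c) + Real.cot (b-c) * Real.cot (b-a)
      + Real.cot (c-a) * Real.cot (c-b) = -1 := by
  have eb : b - a = -(a-b) := by ring
  have ec : c - a = -(a-c) := by ring
  have ecb : c - b = -(b-c) := by ring
  have eac : a - c = (a-b) + (b-c) := by ring
  rw [eb, ec, ecb, my_cot_neg, my_cot_neg, my_cot_neg]
  rw [eac] at h3 ⊢
  set u := a - b
  set v := b - c
  rw [Real.sin_add] at h3
  simp only [Real.cot_eq_cos_div_sin, Real.sin_add, Real.cos_add]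
  field_simp
  ring_nf

lemma nested_eq (N : ℕ) (f : Fin N → Fin N → Fin N → ℝ) :
    ∑ i : Fin N, ∑ j ∈ univ.filter (fun j => j ≠ i),
      ∑ k ∈ univ.filter (fun k => k ≠ i ∧ k ≠ j), f i j k
    = ∑ p ∈ (univ : Finset (Fin N × Fin N × Fin N)).filter
        (fun p => p.1 ≠ p.2.1 ∧ p.2.1 ≠ p.2.2 ∧ p.2.2 ≠ p.1),
        f p.1 p.2.1 p.2.2 := by
  rw [Finset.sum_filter, Fintype.sum_prod_type]
  simp only [Fintype.sum_prod_type, Finset.sum_filter]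
  refine Finset.sum_congr rfl fun i _ => Finset.sum_congr rfl fun j _ => ?_
  by_cases hji : j = i
  · subst hji
    simp
  · rw [if_pos hji]
    refine Finset.sum_congr rfl fun k _ => ?_
    split_ifs <;> first | rfl | tauto

lemma cyc_sum (N : ℕ) (f : Fin N → Fin N → Fin N → ℝ) :
    ∑ p ∈ (univ : Finset (Fin N × Fin N × Fin N)).filter
        (fun p => p.1 ≠ p.2.1 ∧ p.2.1 ≠ p.2.2 ∧ p.2.2 ≠ p.1),
        f p.1 p.2.1 p.2.2
    = ∑ p ∈ (univ : Finset (Fin N × Fin N × Fin N)).filter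
        (fun p => p.1 ≠ p.2.1 ∧ p.2.1 ≠ p.2.2 ∧ p.2.2 ≠ p.1),
        f p.2.1 p.2.2 p.1 := by
  refine Finset.sum_nbij' (fun p => (p.2.2, p.1, p.2.1)) (fun p => (p.2.1, p.2.2, p.1))
    ?_ ?_ ?_ ?_ ?_ <;> intro p hp <;> simp_all [Finset.mem_filter]

theorem cot_sum_over_distinct_triples (N : ℕ) (hN : 3 ≤ N) (x : Fin N → ℝ)
    (hx : ∀ i j : Fin N, i ≠ j → Real.sin (x i - x j) ≠ 0) :
    ∑ i : Fin N, ∑ j ∈ univ.filter (fun j => j ≠ i),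
      ∑ k ∈ univ.filter (fun k => k ≠ i ∧ k ≠ j),
        Real.cot (x i - x j) * Real.cot (x i - x k)
      = -(N : ℝ) * ((N : ℝ) - 1) * ((N : ℝ) - 2) / 3 := by
  set f : Fin N → Fin N → Fin N → ℝ :=
    fun i j k => Real.cot (x i - x j) * Real.cot (x i - x k) with hf
  set T := (univ : Finset (Fin N × Fin N × Fin N)).filter
      (fun p => p.1 ≠ p.2.1 ∧ p.2.1 ≠ p.2.2 ∧ p.2.2 ≠ p.1) with hT
  have hS : ∑ i : Fin N, ∑ j ∈ univ.filter (fun j => j ≠ i),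
      ∑ k ∈ univ.filter (fun k => k ≠ i ∧ k ≠ j), f i j k
      = ∑ p ∈ T, f p.1 p.2.1 p.2.2 := nested_eq N f
  -- card of T
  have hcard : (T.card : ℝ) = (N : ℝ) * ((N : ℝ) - 1) * ((N : ℝ) - 2) := by
    have h1 : (T.card : ℝ) = ∑ p ∈ T, (1 : ℝ) := by simp
    have h2 := nested_eq N (fun _ _ _ => (1 : ℝ))
    rw [h1, ← h2]
    have inner : ∀ i j : Fin N, j ≠ i →
        (univ.filter (fun k => k ≠ i ∧ k ≠ j)).card = N - 2 := by
      intro i j hji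
      have : (univ.filter (fun k => k ≠ i ∧ k ≠ j)) = (univ : Finset (Fin N)) \ {i, j} := by
        ext k; simp [and_comm]
      rw [this, Finset.card_sdiff_of_subset (by simp)]
      rw [Finset.card_univ, Fintype.card_fin, Finset.card_insert_of_notMem (by simp [hji.symm]),
        Finset.card_singleton]
    have jcard : ∀ i : Fin N, (univ.filter (fun j => j ≠ i)).card = N - 1 := by
      intro i
      have : (univ.filter (fun j => j ≠ i)) = (univ : Finset (Fin N)) \ {i} := by
        ext j; simp
      rw [this, Finset.card_sdiff_of_subset (by simp), Finset.card_univ, Fintype.card_fin,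
        Finset.card_singleton]
    calc ∑ i : Fin N, ∑ j ∈ univ.filter (fun j => j ≠ i),
          ∑ _k ∈ univ.filter (fun k => k ≠ i ∧ k ≠ j), (1 : ℝ)
        = ∑ i : Fin N, ∑ j ∈ univ.filter (fun j => j ≠ i), ((N : ℝ) - 2) := by
          refine Finset.sum_congr rfl fun i _ => Finset.sum_congr rfl fun j hj => ?_
          rw [Finset.sum_const, inner i j (Finset.mem_filter.mp hj).2, nsmul_eq_mul]
          have : (2 : ℕ) ≤ N := by omega
          push_cast [this]
          ring
      _ = ∑ _i : Fin N, ((N : ℝ) - 1) * ((N : ℝ) - 2) := by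
          refine Finset.sum_congr rfl fun i _ => ?_
          rw [Finset.sum_const, jcard i, nsmul_eq_mul]
          have : (1 : ℕ) ≤ N := by omega
          push_cast [this]
          ring
      _ = (N : ℝ) * ((N : ℝ) - 1) * ((N : ℝ) - 2) := by
          rw [Finset.sum_const, Finset.card_univ, Fintype.card_fin, nsmul_eq_mul]
          ring
  -- three copies via cyclic bijection
  have hc1 : ∑ p ∈ T, f p.1 p.2.1 p.2.2 = ∑ p ∈ T, f p.2.1 p.2.2 p.1 := cyc_sum N f
  have hc2 : ∑ p ∈ T, f p.2.1 p.2.2 p.1 = ∑ p ∈ T, f p.2.2 p.1 p.2.1 :=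
    cyc_sum N (fun i j k => f j k i)
  have hsum3 : (3 : ℝ) * ∑ p ∈ T, f p.1 p.2.1 p.2.2
      = ∑ p ∈ T, (f p.1 p.2.1 p.2.2 + f p.2.1 p.2.2 p.1 + f p.2.2 p.1 p.2.1) := by
    rw [Finset.sum_add_distrib, Finset.sum_add_distrib, ← hc1, ← hc2, ← hc1]
    ring
  have hpt : ∀ p ∈ T, f p.1 p.2.1 p.2.2 + f p.2.1 p.2.2 p.1 + f p.2.2 p.1 p.2.1 = -1 := by
    rintro ⟨i, j, k⟩ hp
    rw [hT, Finset.mem_filter] at hp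
    obtain ⟨-, hij, hjk, hki⟩ := hp
    exact key_cot (x i) (x j) (x k) (hx i j hij) (hx j k hjk)
      (hx i k (fun h => hki h.symm))
  have : (3 : ℝ) * ∑ p ∈ T, f p.1 p.2.1 p.2.2 = -(T.card : ℝ) := by
    rw [hsum3, Finset.sum_congr rfl hpt, Finset.sum_const, nsmul_eq_mul]
    ring
  rw [hS]
  rw [hcard] at this
  linarith
end

section
/- Let N ≥ 1 and let x_1, …, x_N be real numbers such that sin(x_i − x_j) ≠ 0 for all i ≠ j. Then Σ_{i=1}^{N} ( Σ_{j ≠ i} cot(x_i − x_j) )² = 2 Σ_{1 ≤ i < j ≤ N} 1/sin²(x_i − x_j) − N(N²−1)/3. -/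
open Finset

private lemma cot_sq_eq (y : ℝ) (h : Real.sin y ≠ 0) :
    Real.cot y ^ 2 = 1 / Real.sin y ^ 2 - 1 := by
  rw [Real.cot_eq_cos_div_sin, div_pow, Real.cos_sq']
  field_simp

private lemma aux_cot (sa ca sb cb : ℝ) (hsa : sa ≠ 0) (hsb : sb ≠ 0)
    (hab : sa * cb + ca * sb ≠ 0) :
    ca / sa * ((ca * cb - sa * sb) / (sa * cb + ca * sb))
      + cb / sb * (-(ca / sa))
      + -((ca * cb - sa * sb) / (sa * cb + ca * sb)) * (-(cb / sb)) = -1 := by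
  field_simp
  ring

private lemma apex (p q r : ℝ) (h1 : Real.sin (p - q) ≠ 0) (h2 : Real.sin (q - r) ≠ 0)
    (h3 : Real.sin (p - r) ≠ 0) :
    Real.cot (p - q) * Real.cot (p - r) + Real.cot (q - r) * Real.cot (q - p)
      + Real.cot (r - p) * Real.cot (r - q) = -1 := by
  have e1 : q - p = -(p - q) := by ring
  have e2 : r - p = -(p - r) := by ring
  have e3 : r - q = -(q - r) := by ring
  have e4 : p - r = (p - q) + (q - r) := by ring
  simp only [Real.cot_eq_cos_div_sin, e1, e2, e3, e4, Real.sin_neg, Real.cos_neg,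
    Real.sin_add, Real.cos_add, div_neg, neg_div]
  rw [e4, Real.sin_add] at h3
  exact aux_cot _ _ _ _ h1 h2 h3

private lemma rot {N : ℕ} (H : Fin N → Fin N → Fin N → ℝ) :
    ∑ i : Fin N, ∑ j : Fin N, ∑ k : Fin N, H j k i
      = ∑ i : Fin N, ∑ j : Fin N, ∑ k : Fin N, H i j k := by
  rw [Finset.sum_comm]
  exact Finset.sum_congr rfl fun _ _ => Finset.sum_comm

private lemma main_aux (N : ℕ) (hN : 1 ≤ N) (c f : Fin N → Fin N → ℝ)
    (hsq : ∀ i j, j ≠ i → c i j ^ 2 = f i j - 1)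
    (hfs : ∀ i j, f j i = f i j)
    (hap : ∀ i j k, j ≠ i → k ≠ i → k ≠ j →
      c i j * c i k + c j k * c j i + c k i * c k j = -1) :
    ∑ i : Fin N, (∑ j ∈ univ.filter (fun j => j ≠ i), c i j) ^ 2
      = 2 * (∑ i : Fin N, ∑ j ∈ univ.filter (fun j => i < j), f i j)
        - (N : ℝ) * ((N : ℝ) ^ 2 - 1) / 3 := by
  have cardNe : ∀ i : Fin N, ∑ j : Fin N, (if j ≠ i then (1 : ℝ) else 0) = (N : ℝ) - 1 := by
    intro i
    rw [Finset.sum_boole]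
    rw [Finset.filter_ne', Finset.card_erase_of_mem (mem_univ i), Finset.card_univ,
      Fintype.card_fin]
    push_cast [Nat.cast_sub hN]
    ring
  -- expand the square and split the diagonal
  have expand : ∀ i : Fin N,
      (∑ j ∈ univ.filter (fun j => j ≠ i), c i j) ^ 2
        = (∑ j : Fin N, if j ≠ i then (c i j) ^ 2 else 0)
          + ∑ j : Fin N, ∑ k : Fin N,
              (if j ≠ i ∧ k ≠ i ∧ k ≠ j then c i j * c i k else 0) := by
    intro i
    rw [Finset.sum_filter, sq, Finset.sum_mul_sum, ← Finset.sum_add_distrib]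
    refine Finset.sum_congr rfl fun j _ => ?_
    have h1 : ∀ k : Fin N,
        (if j ≠ i then c i j else 0) * (if k ≠ i then c i k else 0)
          = if j ≠ i ∧ k ≠ i then c i j * c i k else 0 := by
      intro k; split_ifs with h a b <;> simp_all
    simp only [h1]
    rw [← Finset.add_sum_erase _ _ (mem_univ j), ← Finset.filter_ne', Finset.sum_filter]
    congr 1
    · split_ifs with h h' <;> simp_all [sq]
    · refine Finset.sum_congr rfl fun k _ => ?_
      split_ifs <;> simp_all
  rw [Finset.sum_congr rfl fun i _ => expand i, Finset.sum_add_distrib]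
  -- part A : the squared part of the diagonal
  have partA : ∑ i : Fin N, ∑ j : Fin N, (if j ≠ i then (c i j) ^ 2 else 0)
      = (∑ i : Fin N, ∑ j : Fin N, (if j ≠ i then f i j else 0))
        - (N : ℝ) * ((N : ℝ) - 1) := by
    have key : ∀ i j : Fin N, (if j ≠ i then (c i j) ^ 2 else 0)
        = (if j ≠ i then f i j else 0) - (if j ≠ i then (1 : ℝ) else 0) := by
      intro i j
      split_ifs with h
      · rw [hsq i j h]
      · ring
    simp only [key, Finset.sum_sub_distrib, cardNe]
    simp [Finset.sum_const, Finset.card_univ]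
    ring
  rw [partA]
  -- part B : symmetrization
  have partB : ∑ i : Fin N, ∑ j : Fin N, (if j ≠ i then f i j else 0)
      = 2 * (∑ i : Fin N, ∑ j ∈ univ.filter (fun j => i < j), f i j) := by
    have split : ∀ i j : Fin N, (if j ≠ i then f i j else 0)
        = (if i < j then f i j else 0) + (if j < i then f i j else 0) := by
      intro i j
      rcases lt_trichotomy i j with h | h | h
      · rw [if_pos (Ne.symm (ne_of_lt h)), if_pos h, if_neg (asymm h)]; ring
      · rw [if_neg (by simp [h]), if_neg (by simp [h]), if_neg (by simp [h])]; ring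
      · rw [if_pos (ne_of_lt h), if_neg (asymm h), if_pos h]; ring
    simp only [split, Finset.sum_add_distrib]
    have flip : ∑ i : Fin N, ∑ j : Fin N, (if j < i then f i j else 0)
        = ∑ i : Fin N, ∑ j : Fin N, (if i < j then f i j else 0) := by
      rw [Finset.sum_comm]
      exact Finset.sum_congr rfl fun i _ => Finset.sum_congr rfl fun j _ => by
        rw [hfs]
    rw [flip, Finset.sum_congr rfl fun i _ => (Finset.sum_filter _ _).symm]
    ring
  rw [partB]
  -- part T : the off-diagonal triple sum
  have hE2 : (∑ i : Fin N, ∑ j : Fin N, ∑ k : Fin N,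
        (if j ≠ i ∧ k ≠ i ∧ k ≠ j then c i j * c i k else 0))
      = ∑ i : Fin N, ∑ j : Fin N, ∑ k : Fin N,
        (if j ≠ i ∧ k ≠ i ∧ k ≠ j then c j k * c j i else 0) := by
    rw [← rot (fun i j k => if j ≠ i ∧ k ≠ i ∧ k ≠ j then c i j * c i k else 0)]
    refine Finset.sum_congr rfl fun i _ => Finset.sum_congr rfl fun j _ =>
      Finset.sum_congr rfl fun k _ => ?_
    refine if_congr ?_ rfl rfl
    constructor <;> rintro ⟨h1, h2, h3⟩ <;> refine ⟨?_, ?_, ?_⟩ <;>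
      first
        | assumption
        | exact Ne.symm h1
        | exact Ne.symm h2
        | exact Ne.symm h3
  have hE3 : (∑ i : Fin N, ∑ j : Fin N, ∑ k : Fin N,
        (if j ≠ i ∧ k ≠ i ∧ k ≠ j then c i j * c i k else 0))
      = ∑ i : Fin N, ∑ j : Fin N, ∑ k : Fin N,
        (if j ≠ i ∧ k ≠ i ∧ k ≠ j then c k i * c k j else 0) := by
    rw [hE2, ← rot (fun i j k => if j ≠ i ∧ k ≠ i ∧ k ≠ j then c j k * c j i else 0)]
    refine Finset.sum_congr rfl fun i _ => Finset.sum_congr rfl fun j _ =>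
      Finset.sum_congr rfl fun k _ => ?_
    refine if_congr ?_ rfl rfl
    constructor <;> rintro ⟨h1, h2, h3⟩ <;> refine ⟨?_, ?_, ?_⟩ <;>
      first
        | assumption
        | exact Ne.symm h1
        | exact Ne.symm h2
        | exact Ne.symm h3
  -- counting the distinct triples
  have count : ∑ i : Fin N, ∑ j : Fin N, ∑ k : Fin N,
      (if j ≠ i ∧ k ≠ i ∧ k ≠ j then (1 : ℝ) else 0)
      = (N : ℝ) * ((N : ℝ) - 1) * ((N : ℝ) - 2) := by
    have inner : ∀ i j : Fin N, (∑ k : Fin N,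
        (if j ≠ i ∧ k ≠ i ∧ k ≠ j then (1 : ℝ) else 0))
        = if j ≠ i then (N : ℝ) - 2 else 0 := by
      intro i j
      by_cases hij : j ≠ i
      · rw [if_pos hij]
        have hk : ∀ k : Fin N, (if j ≠ i ∧ k ≠ i ∧ k ≠ j then (1 : ℝ) else 0)
            = if k ≠ i ∧ k ≠ j then 1 else 0 := by
          intro k; simp [hij]
        rw [Finset.sum_congr rfl fun k _ => hk k, Finset.sum_boole]
        have hfe : univ.filter (fun k => k ≠ i ∧ k ≠ j)
            = (univ \ {i, j} : Finset (Fin N)) := by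
          ext k; simp [not_or]
        have h2 : 2 ≤ N := by
          have hne : (j : ℕ) ≠ (i : ℕ) := fun hh => hij (Fin.ext hh)
          have := i.2; have := j.2; omega
        rw [hfe, Finset.card_sdiff_of_subset (Finset.subset_univ _), Finset.card_univ, Fintype.card_fin,
          Finset.card_insert_of_notMem (by simp [Ne.symm hij]), Finset.card_singleton,
          Nat.cast_sub h2]
        norm_num
      · simp [hij]
    simp only [inner]
    have mid : ∀ i : Fin N, (∑ j : Fin N, (if j ≠ i then (N : ℝ) - 2 else 0))
        = ((N : ℝ) - 1) * ((N : ℝ) - 2) := by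
      intro i
      have key : ∀ j : Fin N, (if j ≠ i then (N : ℝ) - 2 else 0)
          = (if j ≠ i then (1 : ℝ) else 0) * ((N : ℝ) - 2) := by
        intro j; split_ifs <;> ring
      simp only [key, ← Finset.sum_mul, cardNe]
    simp only [mid, Finset.sum_const, Finset.card_univ, Fintype.card_fin, nsmul_eq_mul]
    ring
  have h3T : (∑ i : Fin N, ∑ j : Fin N, ∑ k : Fin N,
        (if j ≠ i ∧ k ≠ i ∧ k ≠ j then c i j * c i k else 0))
      + (∑ i : Fin N, ∑ j : Fin N, ∑ k : Fin N,
        (if j ≠ i ∧ k ≠ i ∧ k ≠ j then c i j * c i k else 0))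
      + (∑ i : Fin N, ∑ j : Fin N, ∑ k : Fin N,
        (if j ≠ i ∧ k ≠ i ∧ k ≠ j then c i j * c i k else 0))
      = -((N : ℝ) * ((N : ℝ) - 1) * ((N : ℝ) - 2)) := by
    nth_rewrite 2 [hE2]
    nth_rewrite 2 [hE3]
    rw [← count]
    simp only [← Finset.sum_neg_distrib, ← Finset.sum_add_distrib]
    refine Finset.sum_congr rfl fun i _ => Finset.sum_congr rfl fun j _ =>
      Finset.sum_congr rfl fun k _ => ?_
    split_ifs with h
    · rw [hap i j k h.1 h.2.1 h.2.2]
    · ring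
  have hval : (∑ i : Fin N, ∑ j : Fin N, ∑ k : Fin N,
        (if j ≠ i ∧ k ≠ i ∧ k ≠ j then c i j * c i k else 0))
      = -((N : ℝ) * ((N : ℝ) - 1) * ((N : ℝ) - 2)) / 3 := by linarith
  rw [hval]
  ring

theorem cot_sum_sq_eq_inv_sin_sq (N : ℕ) (hN : 1 ≤ N) (x : Fin N → ℝ)
    (hx : ∀ i j : Fin N, i ≠ j → Real.sin (x i - x j) ≠ 0) :
    ∑ i : Fin N, (∑ j ∈ univ.filter (fun j => j ≠ i), Real.cot (x i - x j)) ^ 2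
      = 2 * (∑ i : Fin N, ∑ j ∈ univ.filter (fun j => i < j),
          1 / Real.sin (x i - x j) ^ 2)
        - (N : ℝ) * ((N : ℝ) ^ 2 - 1) / 3 := by
  refine main_aux N hN (fun i j => Real.cot (x i - x j))
    (fun i j => 1 / Real.sin (x i - x j) ^ 2) ?_ ?_ ?_
  · intro i j h
    rw [cot_sq_eq _ (hx i j (Ne.symm h))]
  · intro i j
    rw [show x j - x i = -(x i - x j) by ring, Real.sin_neg, neg_pow]
    norm_num
  · intro i j k h1 h2 h3
    exact apex (x i) (x j) (x k) (hx i j (Ne.symm h1)) (hx j k (Ne.symm h3))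
      (hx i k (Ne.symm h2))
end

section
/- (Isospectrality of the Calogero–Sutherland Hamiltonians.) Let N ≥ 1, let b be a real number, let x ∈ ℝ^N satisfy sin(x_i − x_j) ≠ 0 for all i ≠ j, and let f : ℝ^N → ℝ be twice continuously differentiable at x. For each i set G_i(y) = b² Σ_{j ≠ i} cot(y_i − y_j), defined on a neighbourhood of x. Then −(1/2) Σ_{i=1}^{N} [ ∂_i(∂_i f − G_i f)(x) + G_i(x)·(∂_i f(x) − G_i(x) f(x)) ] = −(1/2) Σ_{i=1}^{N} ∂_i² f(x) + b²(b²−1) Σ_{1 ≤ i < j ≤ N} f(x)/sin²(x_i − x_j) − (b⁴/6)·N(N−1)(N+1)·f(x); that is, the Hamiltonian H̃_CS = −(1/2) Σ_i (∂_i + ∂_i ln Π_{j<k} sin^{b²}(x_j − x_k))(∂_i − ∂_i ln Π_{j<k} sin^{b²}(x_j − x_k)) equals H_CS = −(1/2) Σ_i ∂_i² + Σ_{i<j} b²(b²−1)/sin²(x_i − x_j) shifted by the constant −(b⁴/6)N(N−1)(N+1). -/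
/-!
Expanding the product gives `(∂_i + G_i)(∂_i - G_i) f = ∂_i² f - (∂_i G_i + G_i²) f`, so everything
reduces to computing `∑_i (∂_i G_i + G_i²)` at `x`. Here `∂_i G_i = -b² ∑_{j ≠ i} csc²(x_i - x_j)`,
while `G_i²` splits into the diagonal terms `cot² = csc² - 1` and a sum of
`cot(x_i - x_j) cot(x_i - x_k)` over ordered triples of distinct indices. Averaging that triple sum
over cyclic rotations and using `cot(a-b)cot(a-c) + cot(b-c)cot(b-a) + cot(c-a)cot(c-b) = -1`
evaluates it to `-N(N-1)(N-2)/3`, which together with the `-N(N-1)` of the diagonal gives the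
constant `-N(N-1)(N+1)/3`.
-/

open Finset

def distinctTriples (α : Type*) [Fintype α] [DecidableEq α] : Finset (α × α × α) :=
  univ.filter fun t => t.1 ≠ t.2.1 ∧ t.1 ≠ t.2.2 ∧ t.2.1 ≠ t.2.2

section DistinctTriples

variable {α : Type*} [Fintype α] [DecidableEq α]

@[simp]
lemma mem_distinctTriples {t : α × α × α} :
    t ∈ distinctTriples α ↔ t.1 ≠ t.2.1 ∧ t.1 ≠ t.2.2 ∧ t.2.1 ≠ t.2.2 := by
  simp [distinctTriples]

lemma sum_distinctTriples {M : Type*} [AddCommMonoid M] (F : α × α × α → M) :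
    ∑ t ∈ distinctTriples α, F t =
      ∑ i, ∑ j ∈ univ.erase i, ∑ k ∈ (univ.erase i).erase j, F (i, j, k) := by
  rw [sum_finset_product (γ := α) _ univ
    fun i => (univ.erase i ×ˢ univ).filter fun p => p.2 ≠ i ∧ p.2 ≠ p.1]
  · refine sum_congr rfl fun i _ => ?_
    rw [sum_finset_product (γ := α) _ (univ.erase i) fun j => (univ.erase i).erase j]
    intro p
    simp only [mem_filter, mem_product, mem_erase, mem_univ, and_true]
    tauto
  · rintro ⟨i, j, k⟩
    simp only [mem_distinctTriples, mem_univ, mem_filter, mem_product, mem_erase, and_true,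
      true_and]
    tauto

lemma cast_card_distinctTriples {R : Type*} [CommRing R] :
    (#(distinctTriples α) : R) =
      Fintype.card α * (Fintype.card α - 1) * (Fintype.card α - 2) := by
  have h1 (i : α) : (#(univ.erase i) : R) = Fintype.card α - 1 := by
    rw [cast_card_erase_of_mem (mem_univ i), card_univ]
  have h2 (i : α) :
      ∀ j ∈ univ.erase i, (#((univ.erase i).erase j) : R) = Fintype.card α - 2 :=
    fun j hj => by rw [cast_card_erase_of_mem hj, h1]; ring
  rw [card_eq_sum_ones, Nat.cast_sum, sum_distinctTriples]
  simp only [Nat.cast_one, sum_const, nsmul_eq_mul, mul_one]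
  rw [sum_congr rfl fun i _ => sum_congr rfl (h2 i)]
  simp only [sum_const, nsmul_eq_mul, h1, card_univ]
  ring

lemma three_mul_sum_distinctTriples {R : Type*} [CommRing R] (F : α → α → α → R) (c : R)
    (hF : ∀ i j k, i ≠ j → i ≠ k → j ≠ k → F i j k + F j k i + F k i j = c) :
    3 * ∑ t ∈ distinctTriples α, F t.1 t.2.1 t.2.2 = c * #(distinctTriples α) := by
  let rot : α × α × α ≃ α × α × α :=
    ⟨fun t => (t.2.1, t.2.2, t.1), fun t => (t.2.2, t.1, t.2.1), fun _ => rfl, fun _ => rfl⟩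
  have hrot (G : α × α × α → R) :
      ∑ t ∈ distinctTriples α, G (rot t) = ∑ t ∈ distinctTriples α, G t :=
    sum_equiv rot (fun t => by simp only [mem_distinctTriples, rot, Equiv.coe_fn_mk]; tauto)
      fun _ _ => rfl
  calc 3 * ∑ t ∈ distinctTriples α, F t.1 t.2.1 t.2.2
      = ∑ t ∈ distinctTriples α,
          (F t.1 t.2.1 t.2.2 + F t.2.1 t.2.2 t.1 + F t.2.2 t.1 t.2.1) := by
        have h1 : ∑ t ∈ distinctTriples α, F t.2.1 t.2.2 t.1 =
            ∑ t ∈ distinctTriples α, F t.1 t.2.1 t.2.2 := hrot fun t => F t.1 t.2.1 t.2.2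
        have h2 : ∑ t ∈ distinctTriples α, F t.2.2 t.1 t.2.1 =
            ∑ t ∈ distinctTriples α, F t.2.1 t.2.2 t.1 := hrot fun t => F t.2.1 t.2.2 t.1
        rw [sum_add_distrib, sum_add_distrib, h2, h1]
        ring
    _ = ∑ _t ∈ distinctTriples α, c := sum_congr rfl fun t ht => by
        obtain ⟨hij, hik, hjk⟩ := mem_distinctTriples.1 ht
        exact hF _ _ _ hij hik hjk
    _ = c * #(distinctTriples α) := by rw [sum_const, nsmul_eq_mul, mul_comm]

lemma sum_sq_sum_erase {R : Type*} [CommRing R] (c : α → α → R) :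
    ∑ i, (∑ j ∈ univ.erase i, c i j) ^ 2 =
      ∑ i, ∑ j ∈ univ.erase i, c i j ^ 2 +
        ∑ t ∈ distinctTriples α, c t.1 t.2.1 * c t.1 t.2.2 := by
  rw [sum_distinctTriples, ← sum_add_distrib]
  refine sum_congr rfl fun i _ => ?_
  rw [sq, sum_mul_sum, ← sum_add_distrib]
  refine sum_congr rfl fun j hj => ?_
  rw [← add_sum_erase _ _ hj, sq]

end DistinctTriples

lemma sum_sum_erase_eq_two_nsmul_of_symm {α R : Type*} [Fintype α] [LinearOrder α]
    [AddCommMonoid R] (s : α → α → R) (hs : ∀ i j, s i j = s j i) :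
    ∑ i, ∑ j ∈ univ.erase i, s i j = 2 • ∑ i, ∑ j ∈ univ.filter (i < ·), s i j := by
  have hsplit : ∀ i, ∑ j ∈ univ.erase i, s i j =
      ∑ j ∈ univ.filter (i < ·), s i j + ∑ j ∈ univ.filter (· < i), s i j := by
    intro i
    rw [← sum_union (disjoint_filter.2 fun j _ h h' => lt_asymm h h')]
    congr 1
    ext j
    simp only [mem_erase, mem_union, mem_filter, mem_univ, and_true, true_and]
    rw [lt_or_lt_iff_ne, ne_comm]
  have hswap :
      ∑ i, ∑ j ∈ univ.filter (· < i), s i j = ∑ i, ∑ j ∈ univ.filter (i < ·), s i j := by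
    simp only [sum_filter]
    rw [sum_comm]
    simp_rw [hs]
  rw [sum_congr rfl fun i _ => hsplit i, sum_add_distrib, hswap, two_nsmul]

namespace Real

lemma hasDerivAt_cot {y : ℝ} (hy : sin y ≠ 0) : HasDerivAt cot (-(1 / sin y ^ 2)) y := by
  have h := (hasDerivAt_cos y).div (hasDerivAt_sin y) hy
  rw [show cot = cos / sin from funext cot_eq_cos_div_sin]
  refine h.congr_deriv ?_
  field_simp
  linear_combination (-1) * sin_sq_add_cos_sq y

lemma cot_sq {y : ℝ} (hy : sin y ≠ 0) : cot y ^ 2 = 1 / sin y ^ 2 - 1 := by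
  rw [cot_eq_cos_div_sin]
  field_simp
  linear_combination sin_sq_add_cos_sq y

/-- The addition formula `cot (u + v) (cot u + cot v) = cot u cot v - 1` with `u = a - b`,
`v = b - c`. -/
lemma cot_sub_mul_cot_sub_add_cyclic {a b c : ℝ} (hab : sin (a - b) ≠ 0)
    (hac : sin (a - c) ≠ 0) (hbc : sin (b - c) ≠ 0) :
    cot (a - b) * cot (a - c) + cot (b - c) * cot (b - a) + cot (c - a) * cot (c - b) = -1 := by
  have hba : sin (b - a) ≠ 0 := by rwa [← neg_sub, sin_neg, neg_ne_zero]
  have hca : sin (c - a) ≠ 0 := by rwa [← neg_sub, sin_neg, neg_ne_zero]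
  have hcb : sin (c - b) ≠ 0 := by rwa [← neg_sub, sin_neg, neg_ne_zero]
  simp only [cot_eq_cos_div_sin]
  field_simp
  simp only [sin_sub, cos_sub]
  ring

end Real

lemma hasFDerivAt_sum_cot_sub {ι : Type*} [Fintype ι] {x : ι → ℝ} {i : ι} {s : Finset ι}
    (hx : ∀ j ∈ s, Real.sin (x i - x j) ≠ 0) :
    HasFDerivAt (fun y : ι → ℝ => ∑ j ∈ s, Real.cot (y i - y j))
      (∑ j ∈ s, -(1 / Real.sin (x i - x j) ^ 2) •
        (ContinuousLinearMap.proj (R := ℝ) (φ := fun _ : ι => ℝ) i -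
          ContinuousLinearMap.proj j)) x :=
  HasFDerivAt.fun_sum fun j hj => by
    have hdiff := (hasFDerivAt_apply (𝕜 := ℝ) i x).fun_sub (hasFDerivAt_apply j x)
    exact (Real.hasDerivAt_cot (hx j hj)).comp_hasFDerivAt x hdiff

lemma fderiv_fderiv_sub_mul_add_mul {𝕜 E : Type*} [NontriviallyNormedField 𝕜]
    [NormedAddCommGroup E] [NormedSpace 𝕜 E] {f g : E → 𝕜} {g' : E →L[𝕜] 𝕜} {x : E} (v : E)
    (hf : DifferentiableAt 𝕜 f x) (hdf : DifferentiableAt 𝕜 (fun y => fderiv 𝕜 f y v) x)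
    (hg : HasFDerivAt g g' x) :
    fderiv 𝕜 (fun y => fderiv 𝕜 f y v - g y * f y) x v + g x * (fderiv 𝕜 f x v - g x * f x) =
      fderiv 𝕜 (fun y => fderiv 𝕜 f y v) x v - (g' v + g x ^ 2) * f x := by
  rw [(hdf.hasFDerivAt.fun_sub (hg.fun_mul hf.hasFDerivAt)).fderiv]
  simp only [sub_apply, add_apply, smul_apply, smul_eq_mul]
  ring

lemma fderiv_sum_cot_sub_apply_single {ι : Type*} [Fintype ι] [DecidableEq ι] {x : ι → ℝ}
    {i : ι} (hx : ∀ j ∈ univ.erase i, Real.sin (x i - x j) ≠ 0) :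
    fderiv ℝ (fun y : ι → ℝ => ∑ j ∈ univ.erase i, Real.cot (y i - y j)) x (Pi.single i 1) =
      -∑ j ∈ univ.erase i, 1 / Real.sin (x i - x j) ^ 2 := by
  rw [(hasFDerivAt_sum_cot_sub hx).fderiv, ← sum_neg_distrib]
  simp only [_root_.sum_apply, smul_apply, sub_apply, ContinuousLinearMap.proj_apply,
    smul_eq_mul]
  refine sum_congr rfl fun j hj => ?_
  rw [Pi.single_eq_same, Pi.single_eq_of_ne (ne_of_mem_erase hj)]
  ring

lemma sum_sq_sum_cot_sub {ι : Type*} [Fintype ι] [DecidableEq ι] {x : ι → ℝ}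
    (hx : ∀ i j, i ≠ j → Real.sin (x i - x j) ≠ 0) :
    ∑ i, (∑ j ∈ univ.erase i, Real.cot (x i - x j)) ^ 2 =
      ∑ i, ∑ j ∈ univ.erase i, 1 / Real.sin (x i - x j) ^ 2
        - Fintype.card ι * (Fintype.card ι - 1) * (Fintype.card ι + 1) / 3 := by
  have hpairs : ∑ i, ∑ j ∈ univ.erase i, Real.cot (x i - x j) ^ 2 =
      ∑ i, ∑ j ∈ univ.erase i, 1 / Real.sin (x i - x j) ^ 2
        - Fintype.card ι * (Fintype.card ι - 1) := by
    have hcot (i : ι) : ∀ j ∈ univ.erase i,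
        Real.cot (x i - x j) ^ 2 = 1 / Real.sin (x i - x j) ^ 2 - 1 :=
      fun j hj => Real.cot_sq (hx i j (ne_of_mem_erase hj).symm)
    simp only [sum_congr rfl fun i _ => sum_congr rfl (hcot i), sum_sub_distrib, sum_const,
      nsmul_eq_mul, mul_one, cast_card_erase_of_mem (mem_univ _), card_univ]
    ring
  have htriples := three_mul_sum_distinctTriples
    (fun i j k => Real.cot (x i - x j) * Real.cot (x i - x k)) (-1)
    fun i j k hij hik hjk =>
      Real.cot_sub_mul_cot_sub_add_cyclic (hx _ _ hij) (hx _ _ hik) (hx _ _ hjk)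
  rw [cast_card_distinctTriples] at htriples
  rw [sum_sq_sum_erase, hpairs]
  linear_combination htriples / 3

theorem CS_isospectral_general (N : ℕ) (b : ℝ) (x : Fin N → ℝ)
    (hx : ∀ i j : Fin N, i ≠ j → Real.sin (x i - x j) ≠ 0)
    (f : (Fin N → ℝ) → ℝ) (hf : ContDiffAt ℝ 2 f x)
    (G : Fin N → (Fin N → ℝ) → ℝ)
    (hG : ∀ (i : Fin N) (y : Fin N → ℝ),
      G i y = b ^ 2 * ∑ j ∈ univ.filter (fun j => j ≠ i), Real.cot (y i - y j)) :
    -(1 / 2) * ∑ i : Fin N,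
        (fderiv ℝ (fun y => fderiv ℝ f y (Pi.single i 1) - G i y * f y) x (Pi.single i 1)
          + G i x * (fderiv ℝ f x (Pi.single i 1) - G i x * f x))
      = -(1 / 2) * ∑ i : Fin N,
            fderiv ℝ (fun y => fderiv ℝ f y (Pi.single i 1)) x (Pi.single i 1)
        + b ^ 2 * (b ^ 2 - 1) *
            ∑ i : Fin N, ∑ j ∈ univ.filter (fun j => i < j),
              f x / Real.sin (x i - x j) ^ 2
        - b ^ 4 / 6 * (N : ℝ) * ((N : ℝ) - 1) * ((N : ℝ) + 1) * f x := by
  have hsin (i : Fin N) : ∀ j ∈ univ.erase i, Real.sin (x i - x j) ≠ 0 :=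
    fun j hj => hx i j (ne_of_mem_erase hj).symm
  have hG_eq (i : Fin N) :
      G i = fun y => b ^ 2 * ∑ j ∈ univ.erase i, Real.cot (y i - y j) := by
    ext y; rw [hG, filter_ne']
  have hG_diff (i : Fin N) : DifferentiableAt ℝ (G i) x := by
    rw [hG_eq]
    exact ((hasFDerivAt_sum_cot_sub (hsin i)).const_mul _).differentiableAt
  have hdf (v : Fin N → ℝ) : DifferentiableAt ℝ (fun y => fderiv ℝ f y v) x :=
    ((hf.fderiv_right le_rfl).differentiableAt one_ne_zero).clm_apply (differentiableAt_const v)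
  have hpotential (i : Fin N) : fderiv ℝ (G i) x (Pi.single i 1) + G i x ^ 2 =
      -b ^ 2 * ∑ j ∈ univ.erase i, 1 / Real.sin (x i - x j) ^ 2
        + b ^ 4 * (∑ j ∈ univ.erase i, Real.cot (x i - x j)) ^ 2 := by
    rw [hG_eq, fderiv_const_mul ((hasFDerivAt_sum_cot_sub (hsin i)).differentiableAt),
      smul_apply, fderiv_sum_cot_sub_apply_single (hsin i), smul_eq_mul]
    ring
  have hpairs :
      ∑ i : Fin N, ∑ j ∈ univ.filter (fun j => i < j), f x / Real.sin (x i - x j) ^ 2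
        = f x / 2 * ∑ i, ∑ j ∈ univ.erase i, 1 / Real.sin (x i - x j) ^ 2 := by
    rw [sum_sum_erase_eq_two_nsmul_of_symm _ fun i j => by rw [← neg_sub, Real.sin_neg, neg_sq],
      nsmul_eq_mul, Nat.cast_ofNat, ← mul_assoc, div_mul_cancel₀ _ two_ne_zero, mul_sum]
    simp_rw [mul_sum, mul_one_div]
  rw [sum_congr rfl fun i _ => fderiv_fderiv_sub_mul_add_mul (Pi.single i 1)
    (hf.differentiableAt two_ne_zero) (hdf _) (hG_diff i).hasFDerivAt]
  simp only [hpotential, sum_sub_distrib, ← sum_mul, sum_add_distrib, ← mul_sum,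
    sum_sq_sum_cot_sub hx, hpairs, Fintype.card_fin]
  ring

/-- Isospectrality of the Calogero–Sutherland Hamiltonians:
`H̃_CS f = H_CS f − (b⁴/6)N(N−1)(N+1) f` at the point `x`. -/
theorem CS_isospectral (N : ℕ) (hN : 1 ≤ N) (b : ℝ) (x : Fin N → ℝ)
    (hx : ∀ i j : Fin N, i ≠ j → Real.sin (x i - x j) ≠ 0)
    (f : (Fin N → ℝ) → ℝ) (hf : ContDiffAt ℝ 2 f x)
    (G : Fin N → (Fin N → ℝ) → ℝ)
    (hG : ∀ (i : Fin N) (y : Fin N → ℝ),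
      G i y = b ^ 2 * ∑ j ∈ univ.filter (fun j => j ≠ i), Real.cot (y i - y j)) :
    -(1 / 2) * ∑ i : Fin N,
        (fderiv ℝ (fun y => fderiv ℝ f y (Pi.single i 1) - G i y * f y) x (Pi.single i 1)
          + G i x * (fderiv ℝ f x (Pi.single i 1) - G i x * f x))
      = -(1 / 2) * ∑ i : Fin N,
            fderiv ℝ (fun y => fderiv ℝ f y (Pi.single i 1)) x (Pi.single i 1)
        + b ^ 2 * (b ^ 2 - 1) *
            ∑ i : Fin N, ∑ j ∈ univ.filter (fun j => i < j),
              f x / Real.sin (x i - x j) ^ 2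
        - b ^ 4 / 6 * (N : ℝ) * ((N : ℝ) - 1) * ((N : ℝ) + 1) * f x :=
  CS_isospectral_general N b x hx f hf G hG
end

section
/- (Eigen-energy of H_d; central combinatorial identity.) Let λ be a partition with diagonal length d, and for 1 ≤ i ≤ d set n_i = λ_i − i + 1/2 and m_i = λ^t_i − i + 1/2 (rational numbers). Then Σ_{i=1}^{λ_1} (λ^t_i)² = Σ_{i=1}^{d} [ (1/3)(n_i − 1/2) + (m_i − 1/2)(m_i + 1/6) ] + (2/3)·[ Σ_{i=1}^{d} Σ_{j=1}^{d} (2 m_i + n_j) + Σ_{1 ≤ j < i ≤ d} (2 n_i − n_j) + Σ_{1 ≤ i < j ≤ d} (−2 m_i + m_j) ]. -/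
open Finset

/-- The conjugate partition: `conjugate f j` is the number of indices `i` with part
`f i > j`, i.e. (with 0-indexed parts) `λᵗ_{j+1} = #{i ≥ 1 : λ_i ≥ j+1}`. -/
noncomputable def conjugate (f : ℕ → ℕ) (j : ℕ) : ℕ := Nat.card {i : ℕ | j < f i}

/-- The diagonal length `d(λ)`: the number of indices `i ≥ 1` with `λ_i ≥ i`
(0-indexed: parts `f i` with `i < f i`). -/
noncomputable def diagLen (f : ℕ → ℕ) : ℕ := Nat.card {i : ℕ | i < f i}

/-- `nStat f = n(λ) = Σ_{i ≥ 1} (i−1)·λ_i` (0-indexed: `Σ_i i·f i`). -/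
noncomputable def nStat (f : ℕ → ℕ) : ℕ := ∑' i : ℕ, i * f i

lemma card_eq_card_filter {P : ℕ → Prop} [DecidablePred P] {N : ℕ}
    (h : ∀ j, P j → j < N) :
    Nat.card {j : ℕ | P j} = ((range N).filter P).card := by
  have hs : {j : ℕ | P j} = ↑((range N).filter P) := by
    ext j
    simp only [Set.mem_setOf_eq, coe_filter, mem_range, Set.mem_setOf_eq]
    exact ⟨fun hj => ⟨h j hj, hj⟩, fun hj => hj.2⟩
  rw [hs, Nat.card_coe_set_eq, Set.ncard_coe_finset]

lemma downclosed_eq_range (F : Finset ℕ) (h : ∀ j ∈ F, ∀ k, k < j → k ∈ F) :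
    F = range F.card := by
  have hsub : F ⊆ range F.card := by
    intro j hj
    by_contra hc
    rw [mem_range, not_lt] at hc
    have hss : range (j + 1) ⊆ F := by
      intro k hk
      rcases Nat.lt_succ_iff_lt_or_eq.mp (mem_range.mp hk) with h' | h'
      · exact h j hj k h'
      · subst h'; exact hj
    have := Finset.card_le_card hss
    simp only [card_range] at this
    omega
  exact Finset.eq_of_subset_of_card_le hsub (by simp)

lemma sum_max_eq (f : ℕ → ℕ) (d : ℕ) :
    ∑ j ∈ range d, ∑ k ∈ range d, f (max j k) = ∑ j ∈ range d, (2 * j + 1) * f j := by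
  induction d with
  | zero => simp
  | succ d ih =>
    rw [sum_range_succ]
    have h1 : ∀ j ∈ range d, ∑ k ∈ range (d+1), f (max j k)
        = (∑ k ∈ range d, f (max j k)) + f d := by
      intro j hj
      rw [sum_range_succ]
      congr 1
      exact congrArg f (max_eq_right (le_of_lt (mem_range.mp hj)))
    rw [sum_congr rfl h1, sum_add_distrib, ih, sum_const, card_range]
    have h2 : ∑ k ∈ range (d+1), f (max d k) = d * f d + f d := by
      rw [sum_range_succ, max_self]
      congr 1
      have h3 : ∀ k ∈ range d, f (max d k) = f d :=
        fun k hk => congrArg f (max_eq_left (le_of_lt (mem_range.mp hk)))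
      rw [sum_congr rfl h3, sum_const, card_range, smul_eq_mul]
    rw [h2, sum_range_succ]
    ring

lemma swap_tri_sum (g : ℕ → ℚ) (d : ℕ) :
    ∑ i ∈ range d, ∑ j ∈ range i, g j = ∑ j ∈ range d, ((d : ℚ) - 1 - j) * g j := by
  induction d with
  | zero => simp
  | succ d ih =>
    rw [sum_range_succ, ih, sum_range_succ]
    have h0 : ((d + 1 : ℕ) : ℚ) - 1 - (d : ℚ) = 0 := by push_cast; ring
    rw [h0, zero_mul, add_zero, ← sum_add_distrib]
    refine sum_congr rfl fun j _ => ?_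
    push_cast
    ring

lemma cube_sum (d : ℕ) :
    ∑ i ∈ range d, (3 * (i : ℚ) ^ 2 + 3 * i + 1) = (d : ℚ) ^ 3 := by
  induction d with
  | zero => simp
  | succ d ih =>
    rw [sum_range_succ, ih]
    push_cast
    ring

lemma rhs_eq (d : ℕ) (F C n m : ℕ → ℚ)
    (hn : ∀ i, n i = F i - ((i : ℚ) + 1) + 1 / 2)
    (hm : ∀ i, m i = C i - ((i : ℚ) + 1) + 1 / 2) :
    ∑ i ∈ range d, ((1 / 3) * (n i - 1 / 2) + (m i - 1 / 2) * (m i + 1 / 6))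
      + (2 / 3) * ((∑ i ∈ range d, ∑ j ∈ range d, (2 * m i + n j))
        + (∑ i ∈ range d, ∑ j ∈ range i, (2 * n i - n j))
        + (∑ j ∈ range d, ∑ i ∈ range j, (-(2 * m i) + m j)))
    = ∑ i ∈ range d, ((2 * (i : ℚ) + 1) * F i + (C i) ^ 2
        - (3 * (i : ℚ) ^ 2 + 3 * i + 1)) := by
  have h2 : ∑ i ∈ range d, ∑ j ∈ range d, (2 * m i + n j)
      = ∑ i ∈ range d, ((d : ℚ) * (2 * m i) + (d : ℚ) * n i) := by
    simp only [sum_add_distrib, sum_const, card_range, nsmul_eq_mul, mul_sum]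
  have h3 : ∑ i ∈ range d, ∑ j ∈ range i, (2 * n i - n j)
      = ∑ i ∈ range d, ((i : ℚ) * (2 * n i)) - ∑ j ∈ range d, ((d : ℚ) - 1 - j) * n j := by
    rw [← swap_tri_sum n d, ← sum_sub_distrib]
    refine sum_congr rfl fun i _ => ?_
    rw [sum_sub_distrib, sum_const, card_range, nsmul_eq_mul]
  have h4 : ∑ j ∈ range d, ∑ i ∈ range j, (-(2 * m i) + m j)
      = ∑ j ∈ range d, ((d : ℚ) - 1 - j) * (-(2 * m j)) + ∑ j ∈ range d, ((j : ℚ) * m j) := by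
    rw [← swap_tri_sum (fun i => -(2 * m i)) d, ← sum_add_distrib]
    refine sum_congr rfl fun j _ => ?_
    rw [sum_add_distrib, sum_const, card_range, nsmul_eq_mul]
  rw [h2, h3, h4, ← sum_sub_distrib, ← sum_add_distrib, ← sum_add_distrib,
    ← sum_add_distrib, mul_sum, ← sum_add_distrib]
  refine sum_congr rfl fun i _ => ?_
  rw [hn i, hm i]
  ring

/-- Eigen-energy of `H_d`: the central combinatorial identity
`Σ_{i=1}^{λ_1} (λᵗ_i)² = Σ_{i=1}^{d}[(1/3)(n_i−1/2) + (m_i−1/2)(m_i+1/6)]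
 + (2/3)[Σ_{i,j=1}^{d}(2m_i+n_j) + Σ_{j<i}(2n_i−n_j) + Σ_{i<j}(−2m_i+m_j)]`
where `n_i = λ_i − i + 1/2`, `m_i = λᵗ_i − i + 1/2`. -/
theorem Hd_eigenenergy_identity
    (f : ℕ → ℕ) (hmono : Antitone f) (hfin : ∃ M, ∀ i, M ≤ i → f i = 0)
    (d : ℕ) (hd : d = diagLen f)
    (n m : ℕ → ℚ)
    (hn : ∀ i, n i = (f i : ℚ) - (i + 1) + 1 / 2)
    (hm : ∀ i, m i = (conjugate f i : ℚ) - (i + 1) + 1 / 2) :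
    ∑ i ∈ range (f 0), ((conjugate f i : ℚ)) ^ 2
      = ∑ i ∈ range d, ((1 / 3) * (n i - 1 / 2) + (m i - 1 / 2) * (m i + 1 / 6))
        + (2 / 3) * ((∑ i ∈ range d, ∑ j ∈ range d, (2 * m i + n j))
          + (∑ i ∈ range d, ∑ j ∈ range i, (2 * n i - n j))
          + (∑ j ∈ range d, ∑ i ∈ range j, (-(2 * m i) + m j))) := by
  classical
  obtain ⟨M, hM⟩ := hfin
  -- key fact: j < f j ↔ j < d
  have hbd : ∀ j : ℕ, j < f j → j < M := by
    intro j hj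
    by_contra hc
    rw [not_lt] at hc
    have := hM j hc
    omega
  have hdiag : ∀ j : ℕ, j < f j ↔ j < d := by
    have hcard : d = ((range M).filter fun j => j < f j).card := by
      rw [hd, diagLen, card_eq_card_filter hbd]
    have hdc : ∀ j ∈ (range M).filter fun j => j < f j, ∀ k, k < j →
        k ∈ (range M).filter fun j => j < f j := by
      intro j hj k hk
      rw [mem_filter, mem_range] at hj ⊢
      have := hmono (le_of_lt hk)
      omega
    have hFr := downclosed_eq_range _ hdc
    rw [← hcard] at hFr
    intro j
    constructor
    · intro hj
      have : j ∈ (range M).filter fun j => j < f j := by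
        rw [mem_filter, mem_range]; exact ⟨hbd j hj, hj⟩
      rw [hFr, mem_range] at this
      exact this
    · intro hj
      have : j ∈ (range M).filter fun j => j < f j := by
        rw [hFr, mem_range]; exact hj
      exact (mem_filter.mp this).2
  have hfd : ∀ j, d ≤ j → f j ≤ d := by
    intro j hj
    have h1 : f d ≤ d := by
      have := (hdiag d).not.mpr (lt_irrefl d)
      omega
    exact le_trans (hmono hj) h1
  have hd_le_f0 : d ≤ f 0 := by
    rcases Nat.eq_zero_or_pos d with h0 | h0
    · omega
    · have h1 : d - 1 < f (d - 1) := (hdiag (d - 1)).mpr (by omega)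
      have h2 : f (d - 1) ≤ f 0 := hmono (Nat.zero_le _)
      omega
  -- for d ≤ i, conjugate counts only j < d
  have hcd : ∀ i, d ≤ i → conjugate f i
      = ((range d).filter fun j => i < f j).card := by
    intro i hi
    rw [conjugate]
    apply card_eq_card_filter
    intro j hj
    by_contra hc
    rw [not_lt] at hc
    have := hfd j hc
    omega
  -- the tail sum identity
  have htail : (∑ i ∈ Ico d (f 0), (conjugate f i) ^ 2) + d * d * d
      = ∑ j ∈ range d, (2 * j + 1) * f j := by
    have hstep : ∀ i ∈ Ico d (f 0), (conjugate f i) ^ 2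
        = ∑ j ∈ range d, ∑ k ∈ range d, if i < f (max j k) then 1 else 0 := by
      intro i hi
      rw [mem_Ico] at hi
      rw [hcd i hi.1, card_filter, sq, sum_mul_sum]
      refine sum_congr rfl fun j _ => sum_congr rfl fun k _ => ?_
      rw [ite_mul, one_mul, zero_mul, ← ite_and]
      refine if_congr ?_ rfl rfl
      rw [hmono.map_max]
      exact (lt_min_iff).symm
    rw [sum_congr rfl hstep, sum_comm]
    have hswap : ∀ j ∈ range d, ∑ i ∈ Ico d (f 0), ∑ k ∈ range d,
        (if i < f (max j k) then 1 else 0)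
        = ∑ k ∈ range d, (f (max j k) - d) := by
      intro j hj
      rw [sum_comm]
      refine sum_congr rfl fun k hk => ?_
      rw [← card_filter]
      have hle : f (max j k) ≤ f 0 := hmono (Nat.zero_le _)
      have : (Ico d (f 0)).filter (fun i => i < f (max j k)) = Ico d (f (max j k)) := by
        rw [Ico_filter_lt, min_eq_right hle]
      rw [this, Nat.card_Ico]
    rw [sum_congr rfl hswap]
    have hge : ∀ j ∈ range d, ∀ k ∈ range d, d ≤ f (max j k) := by
      intro j hj k hk
      rw [mem_range] at hj hk
      have h1 : max j k ≤ d - 1 := by omega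
      have h2 : d - 1 < f (d - 1) := (hdiag (d - 1)).mpr (by omega)
      have h3 := hmono h1
      omega
    have hfin2 : ∑ j ∈ range d, ∑ k ∈ range d, (f (max j k) - d) + d * d * d
        = ∑ j ∈ range d, ∑ k ∈ range d, f (max j k) := by
      have e1 : ∑ j ∈ range d, ∑ k ∈ range d, f (max j k)
          = ∑ j ∈ range d, ∑ k ∈ range d, ((f (max j k) - d) + d) := by
        refine sum_congr rfl fun j hj => sum_congr rfl fun k hk => ?_
        exact (Nat.sub_add_cancel (hge j hj k hk)).symm
      rw [e1]
      simp only [sum_add_distrib, sum_const, card_range, smul_eq_mul]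
      ring
    rw [hfin2, sum_max_eq]
  -- final assembly
  have hsplit : ∑ i ∈ range (f 0), (conjugate f i) ^ 2
      = ∑ i ∈ range d, (conjugate f i) ^ 2 + ∑ i ∈ Ico d (f 0), (conjugate f i) ^ 2 := by
    rw [range_eq_Ico, ← Finset.sum_Ico_consecutive _ (Nat.zero_le d) hd_le_f0, ← range_eq_Ico]
  have HN : ∑ i ∈ range (f 0), (conjugate f i) ^ 2 + d * d * d
      = ∑ i ∈ range d, (conjugate f i) ^ 2 + ∑ j ∈ range d, (2 * j + 1) * f j := by
    rw [hsplit, add_assoc, htail]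
  have HQ := congrArg (fun x : ℕ => (x : ℚ)) HN
  push_cast at HQ
  rw [rhs_eq d (fun i => (f i : ℚ)) (fun i => (conjugate f i : ℚ)) n m hn hm]
  rw [sum_sub_distrib, sum_add_distrib, cube_sum d]
  have hdd : (d : ℚ) * d * d = (d : ℚ) ^ 3 := by ring
  linarith [HQ]
end

section
/- Let λ be a partition with diagonal length d and Frobenius coordinates α_i = λ_i − i, β_i = λ^t_i − i (1 ≤ i ≤ d). Then Σ_{j=1}^{λ_1} (λ^t_j)² = Σ_{i=1}^{d} ( β_i² + 2 i α_i − α_i + 2 i β_i ) + d². -/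
open Finset

lemma mem_iff_lt_card_aux (S : Set ℕ) (M : ℕ) (hb : ∀ i ∈ S, i < M)
    (hdc : ∀ k i, k ≤ i → i ∈ S → k ∈ S) (i : ℕ) : i ∈ S ↔ i < Nat.card S := by
  have hfin : S.Finite := Set.Finite.subset (Set.finite_Iio M) (fun x hx => hb x hx)
  have hcard : Nat.card S = hfin.toFinset.card := by
    rw [Nat.card_coe_set_eq, Set.ncard_eq_toFinset_card _ hfin]
  rw [hcard]
  constructor
  · intro hi
    have hsub : Finset.range (i+1) ⊆ hfin.toFinset := by
      intro k hk
      simp only [Finset.mem_range] at hk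
      simp only [Set.Finite.mem_toFinset]
      exact hdc k i (Nat.lt_succ_iff.mp hk) hi
    have := Finset.card_le_card hsub
    simpa using this
  · intro hi
    by_contra hnot
    have hsub : hfin.toFinset ⊆ Finset.range i := by
      intro j hj
      simp only [Set.Finite.mem_toFinset] at hj
      simp only [Finset.mem_range]
      by_contra hji
      exact hnot (hdc i j (Nat.le_of_not_lt hji) hj)
    have := Finset.card_le_card hsub
    simp only [Finset.card_range] at this
    omega

lemma sum_two_mul_add_one (n : ℕ) : ∑ i ∈ range n, (2*(i:ℤ)+1) = (n:ℤ)^2 := by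
  induction n with
  | zero => simp
  | succ n ih => rw [Finset.sum_range_succ, ih]; push_cast; ring

lemma sum_cube_aux (n : ℕ) :
    ∑ i ∈ range n, ((2*(i:ℤ)+1)*((i:ℤ)+1) + ((i:ℤ)+1)^2) = (n:ℤ)^3 + (n:ℤ)^2 := by
  induction n with
  | zero => simp
  | succ n ih => rw [Finset.sum_range_succ, ih]; push_cast; ring

/-- `Σ_{j=1}^{λ_1} (λᵗ_j)² = Σ_{i=1}^{d} (β_i² + 2iα_i − α_i + 2iβ_i) + d²` in Frobenius
coordinates `α_i = λ_i − i`, `β_i = λᵗ_i − i`. -/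
theorem conj_parts_sq_frobenius
    (f : ℕ → ℕ) (hmono : Antitone f) (hfin : ∃ M, ∀ i, M ≤ i → f i = 0)
    (d : ℕ) (hd : d = diagLen f)
    (α β : ℕ → ℤ)
    (hα : ∀ i, α i = (f i : ℤ) - (i + 1))
    (hβ : ∀ i, β i = (conjugate f i : ℤ) - (i + 1)) :
    ∑ j ∈ range (f 0), ((conjugate f j : ℤ)) ^ 2
      = ∑ i ∈ range d,
          (β i ^ 2 + 2 * ((i : ℤ) + 1) * α i - α i + 2 * ((i : ℤ) + 1) * β i)
        + (d : ℤ) ^ 2 := by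
  obtain ⟨M, hM⟩ := hfin
  have hconj : ∀ i j, i < conjugate f j ↔ j < f i := by
    intro i j
    rw [conjugate, ← mem_iff_lt_card_aux {i : ℕ | j < f i} M]
    · rfl
    · intro i hi
      by_contra h
      have := hM i (Nat.le_of_not_lt h)
      simp only [Set.mem_setOf_eq] at hi
      omega
    · intro k i hki hi
      simp only [Set.mem_setOf_eq] at hi ⊢
      exact lt_of_lt_of_le hi (hmono hki)
  have hdiag : ∀ i, i < d ↔ i < f i := by
    intro i
    rw [hd, diagLen, ← mem_iff_lt_card_aux {i : ℕ | i < f i} M]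
    · rfl
    · intro i hi
      by_contra h
      have := hM i (Nat.le_of_not_lt h)
      simp only [Set.mem_setOf_eq] at hi
      omega
    · intro k i hki hi
      simp only [Set.mem_setOf_eq] at hi ⊢
      exact lt_of_le_of_lt hki (lt_of_lt_of_le hi (hmono hki))
  have hfdd : f d ≤ d := by
    by_contra h
    have := (hdiag d).mpr (Nat.lt_of_not_le h)
    omega
  have hgd : ∀ j, d ≤ j → conjugate f j ≤ d := by
    intro j hj
    by_contra h
    have := (hconj d j).mp (Nat.lt_of_not_le h)
    omega
  have hdf : ∀ i, i < d → d ≤ f i := by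
    intro i hi
    have h1 : d - 1 < f (d - 1) := (hdiag (d-1)).mp (by omega)
    have h2 := hmono (show i ≤ d - 1 by omega)
    omega
  have hd0 : d ≤ f 0 := by
    rcases Nat.eq_zero_or_pos d with h | h
    · omega
    · exact hdf 0 h
  have hsplit : ∑ j ∈ range (f 0), ((conjugate f j : ℤ)) ^ 2
      = ∑ j ∈ range d, ((conjugate f j : ℤ)) ^ 2
        + ∑ j ∈ Ico d (f 0), ((conjugate f j : ℤ)) ^ 2 := by
    rw [Finset.range_eq_Ico, ← Finset.sum_Ico_consecutive _ (Nat.zero_le d) hd0,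
      ← Finset.range_eq_Ico]
  have hT : ∑ j ∈ Ico d (f 0), ((conjugate f j : ℤ)) ^ 2
      = ∑ i ∈ range d, (2*(i:ℤ)+1) * ((f i : ℤ) - (d : ℤ)) := by
    have h1 : ∀ j ∈ Ico d (f 0), ((conjugate f j : ℤ)) ^ 2
        = ∑ i ∈ range d, (if j < f i then (2*(i:ℤ)+1) else 0) := by
      intro j hj
      simp only [Finset.mem_Ico] at hj
      have hle : conjugate f j ≤ d := hgd j hj.1
      have heq : (range d).filter (fun i => j < f i) = range (conjugate f j) := by
        ext k
        simp only [Finset.mem_filter, Finset.mem_range, ← hconj k j]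
        omega
      rw [← Finset.sum_filter, heq, sum_two_mul_add_one]
    rw [Finset.sum_congr rfl h1, Finset.sum_comm]
    apply Finset.sum_congr rfl
    intro i hi
    simp only [Finset.mem_range] at hi
    have hfi : d ≤ f i := hdf i hi
    have hfi0 : f i ≤ f 0 := hmono (Nat.zero_le i)
    have heq : (Ico d (f 0)).filter (fun j => j < f i) = Ico d (f i) := by
      ext j
      simp only [Finset.mem_filter, Finset.mem_Ico]
      omega
    rw [← Finset.sum_filter, heq, Finset.sum_const, Nat.card_Ico, nsmul_eq_mul,
      Nat.cast_sub hfi]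
    ring
  rw [hsplit, hT]
  have hB : (∑ i ∈ range d,
        (β i ^ 2 + 2 * ((i : ℤ) + 1) * α i - α i + 2 * ((i : ℤ) + 1) * β i))
      = ∑ i ∈ range d, (((conjugate f i : ℤ))^2 + (2*(i:ℤ)+1)*(f i : ℤ)
          - ((2*(i:ℤ)+1)*((i:ℤ)+1) + ((i:ℤ)+1)^2)) := by
    apply Finset.sum_congr rfl
    intro i _
    rw [hα, hβ]
    ring
  have hA : (∑ j ∈ range d, ((conjugate f j : ℤ)) ^ 2
        + ∑ i ∈ range d, (2*(i:ℤ)+1) * ((f i : ℤ) - (d : ℤ)))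
      = ∑ i ∈ range d, (((conjugate f i : ℤ))^2 + (2*(i:ℤ)+1)*(f i : ℤ))
        - (∑ i ∈ range d, (2*(i:ℤ)+1)) * (d : ℤ) := by
    rw [Finset.sum_mul, ← Finset.sum_add_distrib, ← Finset.sum_sub_distrib]
    apply Finset.sum_congr rfl
    intro i _
    ring
  rw [hB, hA, Finset.sum_sub_distrib, sum_cube_aux, sum_two_mul_add_one]
  ring
end

section
/- (Free-fermion eigen-energy identity.) Let λ be a partition with diagonal length d. Then Σ_{i=1}^{d} [ (λ_i − i + 1/2)² − (λ^t_i − i + 1/2)² ] = Σ_{i=1}^{ℓ(λ)} λ_i (λ_i − 2i + 1), as an equality of rational numbers, where ℓ(λ) is the number of nonzero parts of λ. -/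
/-!
Both sides are twice the total content `∑ (j - i)` of the Young diagram of `λ`, the cells
being `(i, j)` with `j < λ_{i+1}` (0-indexed). Row by row this is the right-hand side. Cutting
the diagram into its `d` diagonal hooks instead, the arm of the `i`-th hook (the diagonal cell
included) carries the contents `0, …, x - 1` and its leg carries `0, -1, …, -(y - 1)`, where
`x = λ_{i+1} - i` and `y = λᵗ_{i+1} - i`; since `(x - 1/2)² - (y - 1/2)² = x (x - 1) - y (y - 1)`,
this gives the left-hand side. Transposing the diagram turns the legs of `λ` into the arms of `λᵗ`.
-/

open Finset

theorem IsLowerSet.mem_iff_lt_card {s : Set ℕ} (hs : IsLowerSet s) (hs' : s ≠ Set.univ) (i : ℕ) :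
    i ∈ s ↔ i < Nat.card s := by
  obtain ⟨a, rfl⟩ := hs.eq_univ_or_Iio.resolve_left hs'
  simp

section Partition

variable {f : ℕ → ℕ} (hf : Antitone f) (hfin : ∃ M, f M = 0)
include hf hfin

theorem lt_apply_iff_lt_conjugate (i j : ℕ) : j < f i ↔ i < conjugate f j := by
  obtain ⟨M, hM⟩ := hfin
  exact IsLowerSet.mem_iff_lt_card (s := {i | j < f i})
    (fun a b hba ha => lt_of_lt_of_le ha (hf hba))
    ((Set.ne_univ_iff_exists_notMem _).2 ⟨M, by simp [hM]⟩) i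

theorem lt_apply_self_iff_lt_diagLen (i : ℕ) : i < f i ↔ i < diagLen f := by
  obtain ⟨M, hM⟩ := hfin
  exact IsLowerSet.mem_iff_lt_card (s := {i | i < f i})
    (fun a b hba ha => (lt_of_le_of_lt hba ha).trans_le (hf hba))
    ((Set.ne_univ_iff_exists_notMem _).2 ⟨M, by simp [hM]⟩) i

theorem lt_conjugate_self_iff_lt_diagLen (j : ℕ) : j < conjugate f j ↔ j < diagLen f :=
  (lt_apply_iff_lt_conjugate hf hfin j j).symm.trans (lt_apply_self_iff_lt_diagLen hf hfin j)

theorem diagLen_le_conjugate_zero : diagLen f ≤ conjugate f 0 :=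
  le_of_forall_lt fun i hi => (lt_apply_iff_lt_conjugate hf hfin i 0).1
    (((lt_apply_self_iff_lt_diagLen hf hfin i).2 hi).trans_le' i.zero_le)

theorem diagLen_le_apply_zero : diagLen f ≤ f 0 :=
  le_of_forall_lt fun i hi =>
    ((lt_apply_self_iff_lt_diagLen hf hfin i).2 hi).trans_le (hf i.zero_le)

theorem sum_sum_range_conjugate {β : Type*} [AddCommMonoid β] (φ : ℕ → ℕ → β) :
    ∑ i ∈ range (conjugate f 0), ∑ j ∈ range (f i), φ i j
      = ∑ j ∈ range (f 0), ∑ i ∈ range (conjugate f j), φ i j := by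
  refine sum_comm' fun i j => ?_
  simp only [mem_range, ← lt_apply_iff_lt_conjugate hf hfin]
  exact ⟨fun ⟨_, h⟩ => ⟨h, h.trans_le (hf i.zero_le)⟩, fun ⟨h, _⟩ => ⟨h.trans_le' j.zero_le, h⟩⟩

end Partition

theorem two_mul_sum_range_sub (n i : ℕ) :
    2 * ∑ j ∈ range n, ((j : ℚ) - i) = n * (n - 2 * (i + 1) + 1) := by
  induction n with
  | zero => simp
  | succ n ih => rw [sum_range_succ, mul_add, ih]; push_cast; ring

theorem sum_range_ite_le_sub {i n : ℕ} (h : i ≤ n) :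
    ∑ j ∈ range n, (if i ≤ j then (j : ℚ) - i else 0) = ((n : ℚ) - i) * ((n : ℚ) - i - 1) / 2 := by
  induction n, h using Nat.le_induction with
  | base => simp +contextual [sum_eq_zero, not_le.2]
  | succ n hin ih => rw [sum_range_succ, ih, if_pos hin]; push_cast; ring

theorem sum_sum_range_ite_le_sub (h : ℕ → ℕ) {d N : ℕ} (hd : ∀ i, i < h i ↔ i < d) (hdN : d ≤ N) :
    ∑ i ∈ range N, ∑ j ∈ range (h i), (if i ≤ j then (j : ℚ) - i else 0)
      = ∑ i ∈ range d, ((h i : ℚ) - i) * ((h i : ℚ) - i - 1) / 2 := by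
  rw [← sum_range_add_sum_Ico _ hdN]
  have hupper : ∀ i ∈ Ico d N, ∑ j ∈ range (h i), (if i ≤ j then (j : ℚ) - i else 0) = 0 := by
    intro i hi
    have hhi : h i ≤ i := not_lt.1 fun h' => (mem_Ico.1 hi).1.not_gt ((hd i).1 h')
    exact sum_eq_zero fun j hj => if_neg (not_le.2 ((mem_range.1 hj).trans_le hhi))
  rw [sum_eq_zero hupper, add_zero]
  exact sum_congr rfl fun i hi =>
    sum_range_ite_le_sub ((hd i).2 (mem_range.1 hi)).le

theorem sum_sum_range_sub_eq_sum_range_diagLen {f : ℕ → ℕ} (hf : Antitone f) (hfin : ∃ M, f M = 0) :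
    ∑ i ∈ range (conjugate f 0), ∑ j ∈ range (f i), ((j : ℚ) - i)
      = ∑ i ∈ range (diagLen f), (((f i : ℚ) - i) * ((f i : ℚ) - i - 1) / 2
          - ((conjugate f i : ℚ) - i) * ((conjugate f i : ℚ) - i - 1) / 2) := by
  have hcell : ∀ i j : ℕ, (j : ℚ) - i
      = (if i ≤ j then (j : ℚ) - i else 0) - (if j ≤ i then (i : ℚ) - j else 0) := by
    intro i j
    split_ifs with hij hji
    · rw [le_antisymm hij hji]; ring
    · ring
    · ring
    · omega
  rw [sum_congr rfl fun i _ => sum_congr rfl fun j _ => hcell i j]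
  simp only [sum_sub_distrib]
  rw [sum_sum_range_conjugate hf hfin fun i j => if j ≤ i then (i : ℚ) - j else 0,
    sum_sum_range_ite_le_sub f (lt_apply_self_iff_lt_diagLen hf hfin)
      (diagLen_le_conjugate_zero hf hfin),
    sum_sum_range_ite_le_sub (conjugate f) (lt_conjugate_self_iff_lt_diagLen hf hfin)
      (diagLen_le_apply_zero hf hfin)]

/-- Free-fermion eigen-energy identity:
`Σ_{i=1}^{d} [(λ_i − i + 1/2)² − (λᵗ_i − i + 1/2)²] = Σ_{i=1}^{ℓ(λ)} λ_i(λ_i − 2i + 1)`. -/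
theorem free_fermion_eigenenergy
    (f : ℕ → ℕ) (hmono : Antitone f) (hfin : ∃ M, ∀ i, M ≤ i → f i = 0)
    (d : ℕ) (hd : d = diagLen f) :
    ∑ i ∈ range d,
        (((f i : ℚ) - ((i : ℚ) + 1) + 1 / 2) ^ 2
          - ((conjugate f i : ℚ) - ((i : ℚ) + 1) + 1 / 2) ^ 2)
      = ∑ i ∈ range (conjugate f 0),
          (f i : ℚ) * ((f i : ℚ) - 2 * ((i : ℚ) + 1) + 1) := by
  subst hd
  have hzero : ∃ M, f M = 0 := hfin.imp fun M hM => hM M le_rfl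
  simp only [← two_mul_sum_range_sub, ← mul_sum]
  rw [sum_sum_range_sub_eq_sum_range_diagLen hmono hzero, mul_sum]
  exact sum_congr rfl fun i _ => by ring
end

section
/- (Appendix, region lemma in Step 2.) Let λ be a partition with diagonal length d and Frobenius coordinates α_i = λ_i − i (1 ≤ i ≤ d). Then 2 · Σ_{i=1}^{d} Σ_{j=d+1}^{λ_i} ( λ_i − i + λ^t_j − j ) = Σ_{i=1}^{d} ( α_i² + 4 i α_i − 2 d α_i − 3 α_i + 2 d − 2 i ), where the inner sum over j is empty whenever λ_i ≤ d. -/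
open Finset

lemma aux_mem_iff_lt_card (p : ℕ → Prop) (hdc : ∀ i j : ℕ, i ≤ j → p j → p i)
    (M : ℕ) (hM : ∀ i, M ≤ i → ¬ p i) (i : ℕ) :
    p i ↔ i < Nat.card {i : ℕ | p i} := by
  have hfin : {i : ℕ | p i}.Finite := by
    apply (Set.finite_Iio M).subset
    intro x hx
    simp only [Set.mem_Iio]
    by_contra h
    exact hM x (le_of_not_gt h) hx
  have hcard : Nat.card {i : ℕ | p i} = hfin.toFinset.card := by
    rw [Nat.card_coe_set_eq, Set.ncard_eq_toFinset_card _ hfin]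
  rw [hcard]
  constructor
  · intro hp
    have hsub : Finset.range (i+1) ⊆ hfin.toFinset := by
      intro m hm
      simp only [Finset.mem_range] at hm
      simp only [Set.Finite.mem_toFinset, Set.mem_setOf_eq]
      exact hdc m i (Nat.lt_succ_iff.mp hm) hp
    have := Finset.card_le_card hsub
    simpa using this
  · intro hlt
    by_contra hp
    have hsub : hfin.toFinset ⊆ Finset.range i := by
      intro m hm
      simp only [Set.Finite.mem_toFinset, Set.mem_setOf_eq] at hm
      simp only [Finset.mem_range]
      by_contra h
      exact hp (hdc i m (le_of_not_gt h) hm)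
    have := Finset.card_le_card hsub
    simp only [Finset.card_range] at this
    omega

lemma aux_max_sum (t : ℕ → ℤ) (d : ℕ) :
    ∑ i ∈ range d, ∑ k ∈ range d, t (max i k) = ∑ i ∈ range d, (2*(i:ℤ)+1) * t i := by
  induction d with
  | zero => simp
  | succ n ih =>
    rw [Finset.sum_range_succ, Finset.sum_range_succ (fun i => (2*(i:ℤ)+1) * t i)]
    have e1 : ∀ i ∈ range n, ∑ k ∈ range (n+1), t (max i k)
        = (∑ k ∈ range n, t (max i k)) + t n := by
      intro i hi
      rw [Finset.sum_range_succ]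
      rw [Finset.mem_range] at hi
      rw [max_eq_right (le_of_lt hi)]
    rw [Finset.sum_congr rfl e1, Finset.sum_add_distrib, ih, Finset.sum_const]
    have e2 : ∑ k ∈ range (n+1), t (max n k) = (∑ _k ∈ range n, t n) + t n := by
      rw [Finset.sum_range_succ, max_self]
      congr 1
      apply Finset.sum_congr rfl
      intro k hk
      rw [Finset.mem_range] at hk
      rw [max_eq_left (le_of_lt hk)]
    rw [e2, Finset.sum_const, Finset.card_range]
    ring

lemma aux_sum_id (n : ℕ) : (∑ i ∈ range n, ((i:ℤ)+1)) * 2 = n * (n+1) := by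
  induction n with
  | zero => simp
  | succ m ih =>
    rw [Finset.sum_range_succ, add_mul, ih]
    push_cast
    ring

lemma aux_sum_i (n : ℕ) : (∑ i ∈ range n, (i:ℤ)) * 2 = n * (n-1) := by
  induction n with
  | zero => simp
  | succ m ih =>
    rw [Finset.sum_range_succ, add_mul, ih]
    push_cast
    ring

lemma aux_sum_sq (n : ℕ) : (∑ i ∈ range n, (i:ℤ)^2) * 6 = n * (n-1) * (2*n-1) := by
  induction n with
  | zero => simp
  | succ m ih =>
    rw [Finset.sum_range_succ, add_mul, ih]
    push_cast
    ring

lemma aux_polysum (d : ℕ) :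
    ∑ i ∈ range d, (3*(i:ℤ)^2 + 5*i + (d:ℤ)^2 - 3*d + 2 - 4*d*i) = 0 := by
  have h1 := aux_sum_i d
  have h2 := aux_sum_sq d
  have hsplit : ∑ i ∈ range d, (3*(i:ℤ)^2 + 5*i + (d:ℤ)^2 - 3*d + 2 - 4*d*i)
      = 3 * (∑ i ∈ range d, (i:ℤ)^2) + (5 - 4*(d:ℤ)) * (∑ i ∈ range d, (i:ℤ))
        + d * ((d:ℤ)^2 - 3*d + 2) := by
    rw [Finset.mul_sum, Finset.mul_sum, ← Finset.sum_add_distrib]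
    have : (d : ℤ) * ((d:ℤ)^2 - 3*d + 2) = ∑ _i ∈ range d, ((d:ℤ)^2 - 3*d + 2) := by
      rw [Finset.sum_const, nsmul_eq_mul, Finset.card_range]
    rw [this, ← Finset.sum_add_distrib]
    apply Finset.sum_congr rfl
    intro i _
    ring
  rw [hsplit]
  have h6 : 6 * (3 * (∑ i ∈ range d, (i:ℤ)^2) + (5 - 4*(d:ℤ)) * (∑ i ∈ range d, (i:ℤ))
      + d * ((d:ℤ)^2 - 3*d + 2)) = 0 := by
    linear_combination 3*h2 + 3*(5 - 4*(d:ℤ))*h1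
  linarith [h6]

/-- Appendix, region lemma in Step 2:
`2·Σ_{i=1}^{d} Σ_{j=d+1}^{λ_i} (λ_i − i + λᵗ_j − j)
  = Σ_{i=1}^{d} (α_i² + 4iα_i − 2dα_i − 3α_i + 2d − 2i)`,
the inner sum over `j` being empty whenever `λ_i ≤ d`. -/
theorem region_lemma_step2
    (f : ℕ → ℕ) (hmono : Antitone f) (hfin : ∃ M, ∀ i, M ≤ i → f i = 0)
    (d : ℕ) (hd : d = diagLen f)
    (α : ℕ → ℤ) (hα : ∀ i, α i = (f i : ℤ) - (i + 1)) :
    2 * ∑ i ∈ range d, ∑ j ∈ Finset.Ico d (f i),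
        ((f i : ℤ) - ((i : ℤ) + 1) + (conjugate f j : ℤ) - ((j : ℤ) + 1))
      = ∑ i ∈ range d,
          (α i ^ 2 + 4 * ((i : ℤ) + 1) * α i - 2 * (d : ℤ) * α i - 3 * α i
            + 2 * (d : ℤ) - 2 * ((i : ℤ) + 1)) := by
  obtain ⟨M, hM⟩ := hfin
  -- characterization of d
  have hdchar : ∀ i, i < f i ↔ i < d := by
    intro i
    rw [hd, diagLen]
    exact aux_mem_iff_lt_card (fun i => i < f i)
      (fun i j hij hj => lt_of_lt_of_le (lt_of_le_of_lt hij hj) (hmono hij))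
      M (fun i hi => by simp [hM i hi]) i
  -- characterization of conjugate
  have hcchar : ∀ j i, j < f i ↔ i < conjugate f j := by
    intro j i
    rw [conjugate]
    exact aux_mem_iff_lt_card (fun i => j < f i)
      (fun i k hik hk => lt_of_lt_of_le hk (hmono hik))
      M (fun i hi => by simp [hM i hi]) i
  have h3 : ∀ i, i < d → d ≤ f i := by
    intro i hi
    have hd1 : d - 1 < f (d-1) := (hdchar (d-1)).mpr (by omega)
    have := hmono (show i ≤ d - 1 by omega)
    omega
  have hfd : f d ≤ d := by
    have := (hdchar d)
    omega
  have hcd : ∀ j, d ≤ j → conjugate f j ≤ d := by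
    intro j hj
    by_contra h
    have : j < f d := (hcchar j d).mpr (by omega)
    have := hmono (show 0 ≤ d from Nat.zero_le d)
    omega
  have hfilt : ∀ j, d ≤ j → ((range d).filter fun k => j < f k) = range (conjugate f j) := by
    intro j hj
    ext k
    simp only [Finset.mem_filter, Finset.mem_range]
    have h := hcchar j k
    have := hcd j hj
    constructor
    · rintro ⟨_, hk⟩; exact h.mp hk
    · intro hk; exact ⟨by omega, h.mpr hk⟩
  -- split inner sum
  have split1 : ∀ i ∈ range d,
      ∑ j ∈ Finset.Ico d (f i), ((f i : ℤ) - ((i:ℤ)+1) + (conjugate f j : ℤ) - ((j:ℤ)+1))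
      = ((f i:ℤ) - d) * ((f i:ℤ) - ((i:ℤ)+1))
        + (∑ j ∈ Finset.Ico d (f i), (conjugate f j : ℤ))
        - (∑ j ∈ Finset.Ico d (f i), ((j:ℤ)+1)) := by
    intro i hi
    have hm : d ≤ f i := h3 i (Finset.mem_range.mp hi)
    have hcard : ((Finset.Ico d (f i)).card : ℤ) = (f i:ℤ) - d := by
      rw [Nat.card_Ico, Nat.cast_sub hm]
    have hbody : ∀ j ∈ Finset.Ico d (f i),
        ((f i : ℤ) - ((i:ℤ)+1) + (conjugate f j : ℤ) - ((j:ℤ)+1))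
        = ((f i : ℤ) - ((i:ℤ)+1)) + ((conjugate f j : ℤ) - ((j:ℤ)+1)) := by
      intro j _; ring
    rw [Finset.sum_congr rfl hbody, Finset.sum_add_distrib, Finset.sum_const,
      Finset.sum_sub_distrib, nsmul_eq_mul, hcard]
    ring
  -- the conjugate-sum evaluation
  have P2i : ∀ i ∈ range d, ∑ j ∈ Finset.Ico d (f i), (conjugate f j : ℤ)
      = ∑ k ∈ range d, ((f (max i k) : ℤ) - d) := by
    intro i hi
    rw [Finset.mem_range] at hi
    have step1 : ∀ j ∈ Finset.Ico d (f i), (conjugate f j : ℤ)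
        = ∑ k ∈ range d, (if j < f k then (1:ℤ) else 0) := by
      intro j hj
      rw [Finset.mem_Ico] at hj
      have : conjugate f j = ((range d).filter fun k => j < f k).card := by
        rw [hfilt j hj.1, Finset.card_range]
      rw [this, Finset.card_filter]
      push_cast
      rfl
    rw [Finset.sum_congr rfl step1, Finset.sum_comm]
    apply Finset.sum_congr rfl
    intro k hk
    rw [Finset.mem_range] at hk
    have hdk : d ≤ f k := h3 k hk
    have hdi : d ≤ f i := h3 i hi
    rw [Finset.sum_boole, Finset.Ico_filter_lt, Nat.card_Ico, hmono.map_max,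
      Nat.cast_sub (le_min hdi hdk)]
  have P2 : ∑ i ∈ range d, ∑ j ∈ Finset.Ico d (f i), (conjugate f j : ℤ)
      = ∑ i ∈ range d, (2*(i:ℤ)+1) * ((f i:ℤ) - (d:ℤ)) := by
    rw [Finset.sum_congr rfl P2i]
    have := aux_max_sum (fun n => (f n : ℤ) - (d:ℤ)) d
    simpa using this
  have G : ∀ i ∈ range d, (∑ j ∈ Finset.Ico d (f i), ((j:ℤ)+1)) * 2
      = (f i:ℤ)*((f i:ℤ)+1) - (d:ℤ)*((d:ℤ)+1) := by
    intro i hi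
    have hm : d ≤ f i := h3 i (Finset.mem_range.mp hi)
    rw [Finset.sum_Ico_eq_sub _ hm, sub_mul, aux_sum_id, aux_sum_id]
  have main : ∑ i ∈ range d,
      (2*(((f i:ℤ) - (d:ℤ)) * ((f i:ℤ) - ((i:ℤ)+1)))
        + 2*((2*(i:ℤ)+1) * ((f i:ℤ) - (d:ℤ)))
        - ((f i:ℤ)*((f i:ℤ)+1) - (d:ℤ)*((d:ℤ)+1)))
      = ∑ i ∈ range d,
          (α i ^ 2 + 4 * ((i : ℤ) + 1) * α i - 2 * (d : ℤ) * α i - 3 * α i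
            + 2 * (d : ℤ) - 2 * ((i : ℤ) + 1)) := by
    rw [← sub_eq_zero, ← Finset.sum_sub_distrib]
    have keydiff : ∀ i ∈ range d,
        (2*(((f i:ℤ) - (d:ℤ)) * ((f i:ℤ) - ((i:ℤ)+1)))
          + 2*((2*(i:ℤ)+1) * ((f i:ℤ) - (d:ℤ)))
          - ((f i:ℤ)*((f i:ℤ)+1) - (d:ℤ)*((d:ℤ)+1)))
        - (α i ^ 2 + 4 * ((i : ℤ) + 1) * α i - 2 * (d : ℤ) * α i - 3 * α i
            + 2 * (d : ℤ) - 2 * ((i : ℤ) + 1))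
        = 3*(i:ℤ)^2 + 5*(i:ℤ) + (d:ℤ)^2 - 3*(d:ℤ) + 2 - 4*(d:ℤ)*(i:ℤ) := by
      intro i _
      rw [hα i]
      ring
    rw [Finset.sum_congr rfl keydiff]
    exact aux_polysum d
  rw [Finset.sum_congr rfl split1, Finset.sum_sub_distrib, Finset.sum_add_distrib, P2, ← main,
    Finset.sum_sub_distrib, Finset.sum_add_distrib, ← Finset.mul_sum, ← Finset.mul_sum]
  have hGsum : (∑ i ∈ range d, (∑ j ∈ Finset.Ico d (f i), ((j:ℤ)+1))) * 2
      = ∑ i ∈ range d, ((f i:ℤ)*((f i:ℤ)+1) - (d:ℤ)*((d:ℤ)+1)) := by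
    rw [Finset.sum_mul]
    exact Finset.sum_congr rfl G
  linarith [hGsum]
end
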